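/- arXiv:1111.5101 — 4 statements merged into one kernel-verified Lean document; each statement's English description precedes it below -/
import Mathlib

section
/- Let Y be a Riesz space and Z an ideal in Y. Let y₁,...,y_m ∈ Y and z₁,...,z_m ∈ Z satisfy ∑ᵢ zᵢ ≤ ∑ᵢ yᵢ. Suppose there exists z ∈ Z with z ≤ yᵢ for each i = 1,...,m. Then there exist ẑ₁,...,ẑ_m ∈ Z such that ∑ᵢ ẑᵢ = ∑ᵢ zᵢ and ẑᵢ ≤ yᵢ for each i. -/
private theorem sandwich_mem {Y : Type*} [AddCommGroup Y] [Lattice Y] [Module ℝ Y]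
    [CovariantClass Y Y (· + ·) (· ≤ ·)]
    (Z : Submodule ℝ Y) (hsolid : ∀ x y : Y, |x| ≤ |y| → y ∈ Z → x ∈ Z)
    {u v x : Y} (hu : u ∈ Z) (hv : v ∈ Z) (h1 : u ≤ x) (h2 : x ≤ v) : x ∈ Z := by
  have huZ : |u| ∈ Z := hsolid _ u (by rw [abs_abs]) hu
  have hvZ : |v| ∈ Z := hsolid _ v (by rw [abs_abs]) hv
  apply hsolid x (|u| + |v|) _ (Z.add_mem huZ hvZ)
  have hnn : (0:Y) ≤ |u| + |v| := add_nonneg (abs_nonneg u) (abs_nonneg v)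
  rw [abs_of_nonneg hnn, abs_le']
  have hneg : -x ≤ -u := neg_le_neg_iff.2 h1
  constructor
  · exact h2.trans ((le_abs_self v).trans (le_add_of_nonneg_left (abs_nonneg u)))
  · exact hneg.trans ((neg_le_abs u).trans (le_add_of_nonneg_right (abs_nonneg v)))

private theorem sup_mem' {Y : Type*} [AddCommGroup Y] [Lattice Y] [Module ℝ Y]
    [CovariantClass Y Y (· + ·) (· ≤ ·)]
    (Z : Submodule ℝ Y) (hsolid : ∀ x y : Y, |x| ≤ |y| → y ∈ Z → x ∈ Z)
    {a b : Y} (ha : a ∈ Z) (hb : b ∈ Z) : a ⊔ b ∈ Z := by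
  have haZ : |a| ∈ Z := hsolid _ a (by rw [abs_abs]) ha
  have hbZ : |b| ∈ Z := hsolid _ b (by rw [abs_abs]) hb
  refine sandwich_mem Z hsolid ha (Z.add_mem haZ hbZ) le_sup_left (sup_le ?_ ?_)
  · exact (le_abs_self a).trans (le_add_of_nonneg_right (abs_nonneg b))
  · exact (le_abs_self b).trans (le_add_of_nonneg_left (abs_nonneg a))

private theorem fin_sum_le_sum {Y : Type*} [AddCommGroup Y] [Lattice Y]
    [CovariantClass Y Y (· + ·) (· ≤ ·)] :
    ∀ n (f g : Fin n → Y), (∀ i, f i ≤ g i) → ∑ i, f i ≤ ∑ i, g i := by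
  intro n
  induction n with
  | zero => simp
  | succ k IH =>
    intro f g h
    rw [Fin.sum_univ_castSucc, Fin.sum_univ_castSucc (f := g)]
    exact add_le_add (IH _ _ fun i => h i.castSucc) (h (Fin.last k))

private theorem aux_decomp {Y : Type*} [AddCommGroup Y] [Lattice Y] [Module ℝ Y]
    [CovariantClass Y Y (· + ·) (· ≤ ·)]
    (Z : Submodule ℝ Y) (hsolid : ∀ x y : Y, |x| ≤ |y| → y ∈ Z → x ∈ Z)
    (w : Y) (hw : w ∈ Z) :
    ∀ n (y : Fin (n+1) → Y) (s : Y), s ∈ Z → s ≤ ∑ i, y i → (∀ i, w ≤ y i) →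
    ∃ zhat : Fin (n+1) → Y, (∀ i, zhat i ∈ Z) ∧ (∑ i, zhat i = s) ∧ ∀ i, zhat i ≤ y i := by
  intro n
  induction n with
  | zero =>
    intro y s hs hsum hlb
    refine ⟨fun _ => s, fun _ => hs, by simp, fun i => ?_⟩
    have : i = 0 := Fin.fin_one_eq_zero i
    subst this
    simpa [Fin.sum_univ_one] using hsum
  | succ k IH =>
    intro y s hs hsum hlb
    set a := s - ∑ i : Fin (k+1), y i.castSucc with ha_def
    set t := (a ⊔ w) ⊓ y (Fin.last (k+1)) with ht_def
    have hsum' : s ≤ (∑ i : Fin (k+1), y i.castSucc) + y (Fin.last (k+1)) := by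
      rwa [← Fin.sum_univ_castSucc]
    have ha_le_y : a ≤ y (Fin.last (k+1)) := by
      rw [ha_def, sub_le_iff_le_add]
      rwa [add_comm]
    have ht_le : t ≤ y (Fin.last (k+1)) := inf_le_right
    have ha_le_t : a ≤ t := le_inf le_sup_left ha_le_y
    have hw_le_t : w ≤ t := le_inf le_sup_right (hlb (Fin.last (k+1)))
    -- t ∈ Z via sandwich
    have hwsum : (k+1) • w ≤ ∑ i : Fin (k+1), y i.castSucc := by
      calc (k+1) • w = ∑ _i : Fin (k+1), w := by simp
        _ ≤ ∑ i : Fin (k+1), y i.castSucc :=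
            fin_sum_le_sum _ _ _ fun i => hlb i.castSucc
    have ha_ub : a ≤ s - (k+1) • w := sub_le_sub_left hwsum s
    have hvZ : (s - (k+1) • w) ⊔ w ∈ Z :=
      sup_mem' Z hsolid (Z.sub_mem hs (Z.toAddSubmonoid.nsmul_mem hw (k+1))) hw
    have htZ : t ∈ Z := by
      refine sandwich_mem Z hsolid hw hvZ hw_le_t ?_
      exact inf_le_left.trans (sup_le_sup_right ha_ub w)
    -- apply IH to s - t
    have hs' : s - t ∈ Z := Z.sub_mem hs htZ
    have hsum'' : s - t ≤ ∑ i : Fin (k+1), y i.castSucc := by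
      have := sub_le_sub_left ha_le_t s
      simpa [ha_def] using this
    obtain ⟨zh, hzhZ, hzhsum, hzhle⟩ :=
      IH (fun i => y i.castSucc) (s - t) hs' hsum'' (fun i => hlb i.castSucc)
    refine ⟨Fin.snoc zh t, ?_, ?_, ?_⟩
    · intro i
      refine Fin.lastCases ?_ ?_ i
      · simpa using htZ
      · intro j; simpa using hzhZ j
    · rw [Fin.sum_univ_castSucc]
      simp only [Fin.snoc_castSucc, Fin.snoc_last]
      rw [hzhsum]; abel
    · intro i
      refine Fin.lastCases ?_ ?_ i
      · simpa using ht_le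
      · intro j; simpa using hzhle j

/-- Riesz decomposition property relative to an ideal `Z` of a Riesz space `Y`:
if `z₁,...,z_m ∈ Z`, `y₁,...,y_m ∈ Y` with `∑ zᵢ ≤ ∑ yᵢ` and there is `z ∈ Z` with `z ≤ yᵢ`
for all `i`, then there exist `ẑᵢ ∈ Z` with `∑ ẑᵢ = ∑ zᵢ` and `ẑᵢ ≤ yᵢ` for each `i`. -/
theorem ideal_riesz_decomposition {Y : Type*} [AddCommGroup Y] [Lattice Y] [Module ℝ Y]
    [CovariantClass Y Y (· + ·) (· ≤ ·)] [PosSMulMono ℝ Y]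
    (Z : Submodule ℝ Y) (hsolid : ∀ x y : Y, |x| ≤ |y| → y ∈ Z → x ∈ Z)
    (m : ℕ) (y : Fin m → Y) (z : Fin m → Y) (hz : ∀ i, z i ∈ Z)
    (hsum : ∑ i, z i ≤ ∑ i, y i)
    (hlb : ∃ w ∈ Z, ∀ i, w ≤ y i) :
    ∃ zhat : Fin m → Y, (∀ i, zhat i ∈ Z) ∧ (∑ i, zhat i = ∑ i, z i) ∧ ∀ i, zhat i ≤ y i := by
  obtain ⟨w, hwZ, hw⟩ := hlb
  cases m with
  | zero => exact ⟨z, hz, rfl, fun i => i.elim0⟩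
  | succ k =>
    exact aux_decomp Z hsolid w hwZ k y (∑ i, z i) (Z.sum_mem fun i _ => hz i) hsum hw
end

section
/- Let Y be a real vector space with a Hausdorff locally convex topology, U and V convex subsets of Y with U open and U ∩ V ≠ ∅, and y ∈ V ∩ cl(U). If π is a (not necessarily continuous) linear functional on Y with ⟨π, y⟩ ≤ ⟨π, y'⟩ for all y' ∈ U ∩ V, then there exist linear functionals π₁, π₂ on Y with π = π₁ + π₂, π₁ continuous, ⟨π₁, y⟩ ≤ ⟨π₁, u⟩ for all u ∈ U, and ⟨π₂, y⟩ ≤ ⟨π₂, v⟩ for all v ∈ V. -/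
/-!
Separate the open convex set `U × (-∞, π y)` from the epigraph of `π` over `V` in `Y × ℝ`; they are
disjoint because `π y` is the minimum of `π` on `U ∩ V`. The separating functional has the form
`(x, t) ↦ g x + c t` with `c > 0` (a point of `U ∩ V` forces this), and evaluating it at `(y, π y)`,
which lies both in the epigraph and in the closure of the open set, shows that `-g / c` supports `U`
at `y` while `π + g / c` supports `V` at `y`.
-/

open Set

section Separation

variable {E : Type*} [TopologicalSpace E] [AddCommGroup E] [Module ℝ E]

theorem ContinuousLinearMap.apply_prod_real (f : E × ℝ →L[ℝ] ℝ) (x : E) (t : ℝ) :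
    f (x, t) = f (x, 0) + t * f (0, 1) := by
  rw [← smul_eq_mul, ← map_smul, ← map_add]
  simp

variable [IsTopologicalAddGroup E] [ContinuousSMul ℝ E]

theorem geometric_hahn_banach_open_closure {s t : Set E} (hs₁ : Convex ℝ s) (hs₂ : IsOpen s)
    (ht : Convex ℝ t) (disj : Disjoint s t) :
    ∃ f : E →L[ℝ] ℝ, (∀ a ∈ s, ∀ b ∈ t, f a < f b) ∧ ∀ a ∈ closure s, ∀ b ∈ t, f a ≤ f b := by
  obtain ⟨f, u, hs, ht⟩ := geometric_hahn_banach_open hs₁ hs₂ ht disj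
  have hcl : closure s ⊆ f ⁻¹' Iic u :=
    closure_minimal (fun a ha => (hs a ha).le) (isClosed_Iic.preimage f.continuous)
  exact ⟨f, fun a ha b hb => (hs a ha).trans_le (ht b hb),
    fun a ha b hb => (hcl ha).trans (ht b hb)⟩

end Separation

theorem exists_supporting_decomposition_of_le {Y : Type*} [AddCommGroup Y] [Module ℝ Y]
    [TopologicalSpace Y] {U V : Set Y} {y : Y} (π : Y →ₗ[ℝ] ℝ) (g : Y →L[ℝ] ℝ) {c : ℝ}
    (hc : 0 < c) (hgU : ∀ u ∈ U, g u ≤ g y) (hgV : ∀ v ∈ V, g y + π y * c ≤ g v + π v * c) :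
    ∃ π₁ π₂ : Y →ₗ[ℝ] ℝ, Continuous π₁ ∧
      (∀ u ∈ U, π₁ y ≤ π₁ u) ∧ (∀ v ∈ V, π₂ y ≤ π₂ v) ∧ π = π₁ + π₂ := by
  refine ⟨(-c⁻¹ • g : Y →L[ℝ] ℝ), π - (-c⁻¹ • g : Y →L[ℝ] ℝ), (-c⁻¹ • g).continuous,
    fun u hu => ?_, fun v hv => ?_, by simp⟩
  · simp only [ContinuousLinearMap.coe_coe, FunLike.coe_smul, Pi.smul_apply, smul_eq_mul,
      neg_mul, neg_le_neg_iff]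
    exact mul_le_mul_of_nonneg_left (hgU u hu) (inv_nonneg.2 hc.le)
  · simp only [LinearMap.sub_apply, ContinuousLinearMap.coe_coe, FunLike.coe_smul, Pi.smul_apply,
      smul_eq_mul, neg_mul, sub_neg_eq_add]
    have h : π y - π v ≤ c⁻¹ * (g v - g y) := by
      rw [le_inv_mul_iff₀ hc]
      linarith [hgV v hv]
    linarith [mul_sub c⁻¹ (g v) (g y)]

theorem supporting_functional_decomposition_general {Y : Type*} [AddCommGroup Y] [Module ℝ Y]
    [TopologicalSpace Y] [IsTopologicalAddGroup Y] [ContinuousSMul ℝ Y]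
    (U V : Set Y) (hU : Convex ℝ U) (hV : Convex ℝ V) (hUopen : IsOpen U)
    (hUV : (U ∩ V).Nonempty) (y : Y) (hy : y ∈ V ∩ closure U)
    (π : Y →ₗ[ℝ] ℝ) (hπ : ∀ y' ∈ U ∩ V, π y ≤ π y') :
    ∃ π₁ π₂ : Y →ₗ[ℝ] ℝ, Continuous π₁ ∧
      (∀ u ∈ U, π₁ y ≤ π₁ u) ∧ (∀ v ∈ V, π₂ y ≤ π₂ v) ∧ π = π₁ + π₂ := by
  obtain ⟨w, hwU, hwV⟩ := hUV
  set A : Set (Y × ℝ) := U ×ˢ Iio (π y)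
  set B : Set (Y × ℝ) := {p | p.1 ∈ V ∧ π p.1 ≤ p.2}
  have hAB : Disjoint A B := disjoint_left.2 fun p ⟨hpU, hpy⟩ ⟨hpV, hpπ⟩ =>
    (hπ p.1 ⟨hpU, hpV⟩).not_gt (hpπ.trans_lt hpy)
  obtain ⟨f, hlt, hle⟩ := geometric_hahn_banach_open_closure (hU.prod (convex_Iio _))
    (hUopen.prod isOpen_Iio) (π.convexOn hV).convex_epigraph hAB
  have hclA : closure A = closure U ×ˢ Iic (π y) := by rw [closure_prod_eq, closure_Iio]
  have hyA : (y, π y) ∈ closure A := hclA ▸ ⟨hy.2, le_refl (π y)⟩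
  have hyB : (y, π y) ∈ B := ⟨hy.1, le_rfl⟩
  have hc : 0 < f (0, 1) := by
    have h := hlt (w, π y - 1) ⟨hwU, sub_one_lt (π y)⟩ (w, π w) ⟨hwV, le_rfl⟩
    rw [f.apply_prod_real w (π y - 1), f.apply_prod_real w (π w)] at h
    nlinarith [hπ w ⟨hwU, hwV⟩]
  refine exists_supporting_decomposition_of_le π (f.comp (.inl ℝ Y ℝ)) hc
    (fun u hu => ?_) (fun v hv => ?_)
  · have h := hle (u, π y) (hclA ▸ ⟨subset_closure hu, le_refl (π y)⟩) _ hyB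
    rw [f.apply_prod_real u (π y), f.apply_prod_real y (π y)] at h
    simpa using h
  · have h := hle _ hyA (v, π v) ⟨hv, le_rfl⟩
    rw [f.apply_prod_real v (π v), f.apply_prod_real y (π y)] at h
    simpa using h

/-- decomposition of a supporting linear functional into a continuous part
supporting the open convex set `U` and a part supporting the convex set `V`. -/
theorem supporting_functional_decomposition {Y : Type*} [AddCommGroup Y] [Module ℝ Y]
    [TopologicalSpace Y] [IsTopologicalAddGroup Y] [ContinuousSMul ℝ Y]
    [T2Space Y] [LocallyConvexSpace ℝ Y]
    (U V : Set Y) (hU : Convex ℝ U) (hV : Convex ℝ V) (hUopen : IsOpen U)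
    (hUV : (U ∩ V).Nonempty) (y : Y) (hy : y ∈ V ∩ closure U)
    (π : Y →ₗ[ℝ] ℝ) (hπ : ∀ y' ∈ U ∩ V, π y ≤ π y') :
    ∃ π₁ π₂ : Y →ₗ[ℝ] ℝ, Continuous π₁ ∧
      (∀ u ∈ U, π₁ y ≤ π₁ u) ∧ (∀ v ∈ V, π₂ y ≤ π₂ v) ∧ π = π₁ + π₂ :=
  supporting_functional_decomposition_general U V hU hV hUopen hUV y hy π hπ
end

section
/- Under irreducibility (A₇), every non-trivial Walrasian expectations quasi-equilibrium (x, π) of the discrete economy 𝓔 is a Walrasian expectations equilibrium; i.e., if ∑_ω ⟨π(ω), aᵢ(ω)⟩ ≠ 0 for some agent i, and (A₇) holds, then for every agent j, ∑_ω ⟨π(ω), a_j(ω)⟩ ≠ 0 (so every agent's bundle x_j maximizes V_j on B_j(π)). -/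
/-!
If some agents had zero wealth `π · aᵢ = 0`, irreducibility lets the agents of nonzero wealth
improve using the zero-wealth agents' endowments plus their own bundles. Those agents maximize on
their budget sets, so each improved bundle costs strictly more than the agent's wealth; but the
aggregate budget equality forces everyone to spend exactly their wealth, so the improved bundles
together cost at most the total wealth of the improving agents, a contradiction.
-/

open Finset

section BundleValue

variable {Y : Type*} [AddCommGroup Y] [TopologicalSpace Y] [Module ℝ Y] {Ω : Type*} [Fintype Ω]

def bundleValue (π : Ω → Y →L[ℝ] ℝ) (y : Ω → Y) : ℝ := ∑ ω, π ω (y ω)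

variable {π : Ω → Y →L[ℝ] ℝ}

theorem bundleValue_mono [PartialOrder Y] [IsOrderedAddMonoid Y]
    (hπ : ∀ ω, ∀ y : Y, 0 ≤ y → 0 ≤ π ω y) {y z : Ω → Y} (h : ∀ ω, y ω ≤ z ω) :
    bundleValue π y ≤ bundleValue π z := by
  refine sum_le_sum fun ω _ => ?_
  have := hπ ω _ (sub_nonneg.mpr (h ω))
  rwa [map_sub, sub_nonneg] at this

theorem bundleValue_add (y z : Ω → Y) :
    bundleValue π (fun ω => y ω + z ω) = bundleValue π y + bundleValue π z := by
  simp only [bundleValue, map_add, sum_add_distrib]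

theorem bundleValue_sum {ι : Type*} (s : Finset ι) (y : ι → Ω → Y) :
    bundleValue π (fun ω => ∑ i ∈ s, y i ω) = ∑ i ∈ s, bundleValue π (y i) := by
  simp only [bundleValue, map_sum]
  exact sum_comm

theorem bundleValue_eq_of_budget {ι : Type*} [Fintype ι] {x a : ι → Ω → Y}
    (hbud : ∀ i, bundleValue π (x i) ≤ bundleValue π (a i))
    (hagg : bundleValue π (fun ω => ∑ i, x i ω) = bundleValue π (fun ω => ∑ i, a i ω)) (i : ι) :
    bundleValue π (x i) = bundleValue π (a i) := by
  rw [bundleValue_sum, bundleValue_sum] at hagg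
  exact (sum_eq_sum_iff_of_le fun i _ => hbud i).mp hagg i (mem_univ i)

theorem sum_bundleValue_le_of_le [PartialOrder Y] [IsOrderedAddMonoid Y] {ι : Type*}
    (hπ : ∀ ω, ∀ y : Y, 0 ≤ y → 0 ≤ π ω y)
    {s t : Finset ι} {y a x : ι → Ω → Y}
    (h : ∀ ω, ∑ i ∈ t, y i ω ≤ ∑ i ∈ s, a i ω + ∑ i ∈ t, x i ω) :
    ∑ i ∈ t, bundleValue π (y i) ≤
      ∑ i ∈ s, bundleValue π (a i) + ∑ i ∈ t, bundleValue π (x i) := by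
  have := bundleValue_mono hπ h
  rwa [bundleValue_add, bundleValue_sum, bundleValue_sum, bundleValue_sum] at this

end BundleValue

theorem nontrivial_quasi_equilibrium_is_equilibrium_general
    {Y : Type*} [NormedAddCommGroup Y] [Lattice Y] [IsOrderedAddMonoid Y] [NormedSpace ℝ Y]
    {Ω : Type*} [Fintype Ω] {n : ℕ}
    (L : Fin n → Set (Ω → Y))                -- the sets `Lᵢ` of `𝓕ᵢ`-measurable bundles
    (V : Fin n → (Ω → Y) → ℝ)                -- ex ante expected utilities
    (a : Fin n → Ω → Y)
    (π : Ω → Y →L[ℝ] ℝ) (hπ : ∀ ω, ∀ y : Y, 0 ≤ y → 0 ≤ π ω y)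
    (x : Fin n → Ω → Y)
    -- `x` is a feasible allocation
    (hxL : ∀ i, x i ∈ L i) (hfeas : ∀ ω, ∑ i, x i ω ≤ ∑ i, a i ω)
    -- (A₇) irreducibility
    (hirr : ∀ x' : Fin n → Ω → Y, (∀ i, x' i ∈ L i) → (∀ ω, ∑ i, x' i ω ≤ ∑ i, a i ω) →
      ∀ N₁ N₂ : Finset (Fin n), N₁.Nonempty → N₂.Nonempty → Disjoint N₁ N₂ →
        N₁ ∪ N₂ = univ →
        ∃ y : Fin n → Ω → Y, (∀ i ∈ N₂, y i ∈ L i ∧ V i (x' i) < V i (y i)) ∧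
          ∀ ω, ∑ i ∈ N₂, y i ω ≤ ∑ i ∈ N₁, a i ω + ∑ i ∈ N₂, x' i ω)
    -- (2.1) budget membership and maximization when endowment value is nonzero
    (hbud : ∀ i, ∑ ω, π ω (x i ω) ≤ ∑ ω, π ω (a i ω))
    (hmax : ∀ i, (∑ ω, π ω (a i ω)) ≠ 0 →
      ∀ y ∈ L i, (∑ ω, π ω (y ω)) ≤ ∑ ω, π ω (a i ω) → V i y ≤ V i (x i))
    -- (2.2) aggregate budget equality
    (hagg : ∑ ω, π ω (∑ i, x i ω) = ∑ ω, π ω (∑ i, a i ω))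
    -- non-triviality
    (hnt : ∃ i, (∑ ω, π ω (a i ω)) ≠ 0) :
    ∀ j, (∑ ω, π ω (a j ω)) ≠ 0 := by
  intro j hj
  obtain ⟨i₀, hi₀⟩ := hnt
  set N : Finset (Fin n) := univ.filter fun i => bundleValue π (a i) ≠ 0
  have hi₀N : i₀ ∈ N := mem_filter.mpr ⟨mem_univ i₀, hi₀⟩
  have hjN : j ∈ Nᶜ := mem_compl.mpr fun h => (mem_filter.mp h).2 hj
  obtain ⟨y, hy, hyle⟩ :=
    hirr x hxL hfeas Nᶜ N ⟨j, hjN⟩ ⟨i₀, hi₀N⟩ disjoint_compl_left compl_sup_eq_top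
  have hoverspend : ∀ i ∈ N, bundleValue π (a i) < bundleValue π (y i) := fun i hi =>
    lt_of_not_ge fun hle => (hy i hi).2.not_ge (hmax i (mem_filter.mp hi).2 _ (hy i hi).1 hle)
  have hpoor : ∑ i ∈ Nᶜ, bundleValue π (a i) = 0 :=
    sum_eq_zero fun i hi => by simpa [N] using hi
  have hspend := bundleValue_eq_of_budget (π := π) hbud hagg
  have := calc
    ∑ i ∈ N, bundleValue π (a i) < ∑ i ∈ N, bundleValue π (y i) :=
      sum_lt_sum_of_nonempty ⟨i₀, hi₀N⟩ hoverspend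
    _ ≤ ∑ i ∈ Nᶜ, bundleValue π (a i) + ∑ i ∈ N, bundleValue π (x i) :=
      sum_bundleValue_le_of_le hπ hyle
    _ = ∑ i ∈ N, bundleValue π (a i) := by
      rw [hpoor, zero_add, sum_congr rfl fun i _ => hspend i]
  exact this.false

/-- Under irreducibility (A₇), every non-trivial Walrasian expectations
quasi-equilibrium `(x, π)` of the discrete economy `𝓔` is a Walrasian expectations
equilibrium: if the value of some agent's endowment is nonzero, then the value of every
agent's endowment is nonzero. -/
theorem nontrivial_quasi_equilibrium_is_equilibrium
    {Y : Type*} [NormedAddCommGroup Y] [Lattice Y] [IsOrderedAddMonoid Y] [HasSolidNorm Y] [NormedSpace ℝ Y]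
    {Ω : Type*} [Fintype Ω] {n : ℕ}
    (L : Fin n → Set (Ω → Y))                -- the sets `Lᵢ` of `𝓕ᵢ`-measurable bundles
    (V : Fin n → (Ω → Y) → ℝ)                -- ex ante expected utilities
    (a : Fin n → Ω → Y) (ha : ∀ i, a i ∈ L i)
    (π : Ω → Y →L[ℝ] ℝ) (hπ : ∀ ω, ∀ y : Y, 0 ≤ y → 0 ≤ π ω y)
    (x : Fin n → Ω → Y)
    -- `x` is a feasible allocation
    (hxL : ∀ i, x i ∈ L i) (hfeas : ∀ ω, ∑ i, x i ω ≤ ∑ i, a i ω)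
    -- (A₇) irreducibility
    (hirr : ∀ x' : Fin n → Ω → Y, (∀ i, x' i ∈ L i) → (∀ ω, ∑ i, x' i ω ≤ ∑ i, a i ω) →
      ∀ N₁ N₂ : Finset (Fin n), N₁.Nonempty → N₂.Nonempty → Disjoint N₁ N₂ →
        N₁ ∪ N₂ = univ →
        ∃ y : Fin n → Ω → Y, (∀ i ∈ N₂, y i ∈ L i ∧ V i (x' i) < V i (y i)) ∧
          ∀ ω, ∑ i ∈ N₂, y i ω ≤ ∑ i ∈ N₁, a i ω + ∑ i ∈ N₂, x' i ω)
    -- (2.1) budget membership and maximization when endowment value is nonzero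
    (hbud : ∀ i, ∑ ω, π ω (x i ω) ≤ ∑ ω, π ω (a i ω))
    (hmax : ∀ i, (∑ ω, π ω (a i ω)) ≠ 0 →
      ∀ y ∈ L i, (∑ ω, π ω (y ω)) ≤ ∑ ω, π ω (a i ω) → V i y ≤ V i (x i))
    -- (2.2) aggregate budget equality
    (hagg : ∑ ω, π ω (∑ i, x i ω) = ∑ ω, π ω (∑ i, a i ω))
    -- non-triviality
    (hnt : ∃ i, (∑ ω, π ω (a i ω)) ≠ 0) :
    ∀ j, (∑ ω, π ω (a j ω)) ≠ 0 :=
  nontrivial_quasi_equilibrium_is_equilibrium_general L V a π hπ x hxL hfeas hirr hbud hmax hagg hnt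
end

section
/- (Blocking scaling lemma) Assume the continuum economy 𝓔_c satisfies continuity (A₁), concavity (A₃) and strong positivity (A₅) (inf over ω of each aᵢ(ω) exists and is > 0 in Y). Let f be a step allocation, f(t,·) = fᵢ for t ∈ Iᵢ. If f is privately blocked by some coalition in 𝓔_c, then f is privately blocked by a coalition A via a step function g with g(t,·) = gᵢ ∈ Lᵢ for t ∈ A ∩ Iᵢ, such that ∫_A (a(t,ω) − g(t,ω)) dμ(t) ≥ z for all ω ∈ Ω, where z > 0 is a fixed positive element of Y. -/
/-!
Replace the blocking bundle of each type `i` by its average `xᵢ` over the type-`i` members of the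
blocking coalition `A`. The averaged step allocation has the same integral over `A`, hence is
feasible, and by concavity and continuity of `Vᵢ` (Jensen) it is strictly preferred to `fᵢ`
whenever the type has positive measure in `A`. Scaling the averages by `l < 1` close to `1` keeps
the strict preferences by continuity and frees the slack
`(1 - l) ∫_A a ≥ (1 - l) ∑ᵢ μ(A ∩ Iᵢ) zᵢ > 0`, where `zᵢ ≤ aᵢ(ω)` comes from strong positivity.
Dropping the types that are null in `A` changes `A` only by a null set.
-/

open MeasureTheory

/-- The type of agent `t ∈ [0,1]`: `t ∈ Iᵢ` has type `i`. -/
noncomputable def agentType (n : ℕ) (hn : 0 < n) (t : ℝ) : Fin n :=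
  ⟨min ⌊t * n⌋₊ (n - 1), lt_of_le_of_lt (min_le_right _ _) (by omega)⟩

/-- The interval `Iᵢ` of type-`i` agents. -/
def typeInterval (n : ℕ) (i : Fin n) : Set ℝ :=
  if (i : ℕ) = n - 1 then Set.Icc (((i : ℕ) : ℝ) / n) 1
  else Set.Ico (((i : ℕ) : ℝ) / n) ((((i : ℕ) : ℝ) + 1) / n)

section Economy

variable {Y : Type*} [NormedAddCommGroup Y] [Lattice Y] [HasSolidNorm Y]
  [IsOrderedAddMonoid Y] [NormedSpace ℝ Y] [CompleteSpace Y]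
variable {Ω S' : Type*} [Fintype Ω]

/-- The set `Lᵢ` of `𝓕ᵢ`-measurable bundles `Ω → Y₊`, where the partition `𝓕ᵢ` is
encoded by the cell map `c i : Ω → S'`. -/
def measBundles (c : Ω → S') : Set (Ω → Y) :=
  {x : Ω → Y | (∀ ω, 0 ≤ x ω) ∧ ∀ ω ω', c ω = c ω' → x ω = x ω'}

/-- The ex ante expected utility `Vᵢ`. -/
def expUtility (U : Ω → Y → ℝ) (q : Ω → ℝ) (x : Ω → Y) : ℝ :=
  ∑ ω, q ω * U ω (x ω)

/-- The coalition `A` privately blocks the allocation `f` via `g` in the equal-treatment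
continuum economy `𝓔_c`. -/
def PrivatelyBlocks {n : ℕ} (hn : 0 < n) (c : Fin n → Ω → S')
    (U : Fin n → Ω → Y → ℝ) (q : Fin n → Ω → ℝ) (a : Fin n → Ω → Y)
    (f : ℝ → Ω → Y) (A : Set ℝ) (g : ℝ → Ω → Y) : Prop :=
  MeasurableSet A ∧ A ⊆ Set.Icc (0:ℝ) 1 ∧ 0 < volume A ∧
  (∀ t ∈ A, g t ∈ measBundles (c (agentType n hn t))) ∧
  (∀ t ∈ A, expUtility (U (agentType n hn t)) (q (agentType n hn t)) (f t) <
    expUtility (U (agentType n hn t)) (q (agentType n hn t)) (g t)) ∧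
  (∀ ω, IntegrableOn (fun t => g t ω) A volume) ∧
  (∀ ω, (∫ t in A, g t ω) ≤ ∫ t in A, a (agentType n hn t) ω)

end Economy

open Topology

section OrderedSMul

variable {Y : Type*} [AddCommGroup Y] [Lattice Y] [IsOrderedAddMonoid Y] [Module ℝ Y]

theorem dyadic_smul_nonneg {y : Y} (hy : 0 ≤ y) (k m : ℕ) : 0 ≤ ((k : ℝ) / 2 ^ m) • y := by
  induction m with
  | zero => simpa [Nat.cast_smul_eq_nsmul] using nsmul_nonneg hy k
  | succ m ih =>
    refine nsmul_two_semiclosed ?_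
    convert ih using 1
    rw [two_nsmul, ← add_smul, pow_succ]
    congr 1
    field_simp
    ring

variable [TopologicalSpace Y] [OrderClosedTopology Y] [ContinuousSMul ℝ Y]

/-- `r • y` is a limit of the dyadic multiples `(⌊r 2ᵐ⌋ / 2ᵐ) • y`, which are nonnegative since
`0 ≤ 2 • x → 0 ≤ x` in a lattice-ordered group. -/
instance posSMulMono_of_orderClosedTopology : PosSMulMono ℝ Y :=
  PosSMulMono.of_smul_nonneg fun r hr y hy => by
    have hdyadic : Filter.Tendsto (fun m : ℕ => (⌊r * 2 ^ m⌋₊ : ℝ) / 2 ^ m) Filter.atTop (𝓝 r) :=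
      (tendsto_nat_floor_mul_div_atTop hr).comp (tendsto_pow_atTop_atTop_of_one_lt one_lt_two)
    exact isClosed_Ici.mem_of_tendsto (hdyadic.smul_const y)
      (Filter.Eventually.of_forall fun m => dyadic_smul_nonneg hy _ m)

instance posSMulStrictMono_of_orderClosedTopology : PosSMulStrictMono ℝ Y :=
  PosSMulMono.toPosSMulStrictMono

end OrderedSMul

theorem ContinuousOn.comp_aemeasurable_of_ae_mem {α β γ : Type*} [MeasurableSpace α]
    {μ : Measure α} [TopologicalSpace β] [MeasurableSpace β] [OpensMeasurableSpace β]
    [TopologicalSpace γ] [MeasurableSpace γ] [BorelSpace γ] {g : β → γ} {s : Set β} {f : α → β}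
    (hg : ContinuousOn g s) (hf : AEMeasurable f μ) (hfs : ∀ᵐ x ∂μ, f x ∈ s) :
    AEMeasurable (fun x => g (f x)) μ := by
  rcases s.eq_empty_or_nonempty with rfl | hs
  · rw [show μ = 0 by simpa [ae_iff] using hfs]
    exact aemeasurable_zero_measure
  obtain ⟨F, hFm, hFs, hfF⟩ := hf.exists_ae_eq_range_subset hfs hs
  refine ⟨fun x => g (F x), ?_, hfF.fun_comp g⟩
  exact hg.domRestrict.measurable.comp (hFm.subtype_mk (h := fun x => hFs ⟨x, rfl⟩))

section Jensen

variable {α E : Type*} [MeasurableSpace α] {μ : Measure α} [NormedAddCommGroup E]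
  [NormedSpace ℝ E] [CompleteSpace E] {s : Set E} {V : E → ℝ} {f : α → E}

theorem ConcaveOn.setAverage_mem_superlevel (hV : ConcaveOn ℝ s V) (hVc : ContinuousOn V s)
    (hsc : IsClosed s) [IsFiniteMeasure μ] {t : Set α} (ht : μ t ≠ 0)
    (hfs : ∀ᵐ x ∂μ, f x ∈ s) (hfi : Integrable f μ) {r : ℝ}
    (hr : ∀ᵐ x ∂μ.restrict t, r ≤ V (f x)) : ⨍ x in t, f x ∂μ ∈ {y ∈ s | r ≤ V y} :=
  (hV.convex_ge r).set_average_mem (hVc.preimage_isClosed_of_isClosed hsc isClosed_Ici) ht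
    (measure_ne_top μ t) ((ae_restrict_of_ae hfs).and hr) hfi.integrableOn

/-- Some superlevel set `{r + δ ≤ V ∘ f}` has positive measure, and the average of `f` is a proper
convex combination of its averages over that set and over the complement. -/
theorem ConcaveOn.lt_map_average_of_ae_lt [IsFiniteMeasure μ] [NeZero μ]
    (hV : ConcaveOn ℝ s V) (hVc : ContinuousOn V s) (hsc : IsClosed s)
    (hfs : ∀ᵐ x ∂μ, f x ∈ s) (hfi : Integrable f μ) {r : ℝ} (hr : ∀ᵐ x ∂μ, r < V (f x)) :
    r < V (⨍ x, f x ∂μ) := by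
  borelize E
  have hVf : AEMeasurable (fun x => V (f x)) μ :=
    hVc.comp_aemeasurable_of_ae_mem hfi.aestronglyMeasurable.aemeasurable hfs
  set L : ℕ → Set α := fun m => {x | r + 1 / (m + 1) ≤ V (f x)}
  have hLm : ∀ m, NullMeasurableSet (L m) μ := fun _ =>
    nullMeasurableSet_le aemeasurable_const hVf
  obtain ⟨m, hm⟩ : ∃ m, μ (L m) ≠ 0 := by
    by_contra! hL
    have hnot : ∀ᵐ x ∂μ, x ∉ ⋃ m, L m :=
      measure_eq_zero_iff_ae_notMem.mp (measure_iUnion_null hL)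
    have : ∀ᵐ x ∂μ, False := by
      filter_upwards [hr, hnot] with x hx hxL
      obtain ⟨m, hm⟩ := exists_nat_one_div_lt (sub_pos.mpr hx)
      exact hxL (Set.mem_iUnion.mpr ⟨m, show r + 1 / (m + 1) ≤ V (f x) by linarith⟩)
    exact NeZero.ne μ (by simpa [ae_iff] using this)
  have hδ : (0 : ℝ) < 1 / (m + 1) := by positivity
  have hu := hV.setAverage_mem_superlevel hVc hsc hm hfs hfi (ae_restrict_mem₀ (hLm m))
  by_cases hc : μ (L m)ᶜ = 0
  · have hfull : L m =ᵐ[μ] (Set.univ : Set α) := ae_eq_univ.mpr hc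
    rw [← Measure.restrict_univ (μ := μ), ← Measure.restrict_congr_set hfull]
    linarith [hu.2]
  · have hv := hV.setAverage_mem_superlevel hVc hsc hc hfs hfi
      ((ae_restrict_of_ae hr).mono fun x hx => hx.le)
    by_contra! hle
    have hmix := average_mem_openSegment_compl_self (hLm m) hm hc hfi
    exact (hV.lt_right_of_left_lt hu.1 hv.1 hmix (by linarith [hu.2])).not_ge (hle.trans hv.2)

end Jensen

section FiniteTypes

variable {α ι E : Type*} [MeasurableSpace α] {μ : Measure α} [Fintype ι] [MeasurableSpace ι]
  [MeasurableSingletonClass ι] [NormedAddCommGroup E] {τ : α → ι}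

theorem integrable_comp_of_finite [IsFiniteMeasure μ] (hτ : Measurable τ) (h : ι → E) :
    Integrable (fun x => h (τ x)) μ :=
  (Integrable.of_finite (μ := μ.map τ)).comp_measurable hτ

variable [NormedSpace ℝ E]

theorem integral_eq_sum_setIntegral_fiber (hτ : Measurable τ) {F : α → E}
    (hF : Integrable F μ) :
    ∫ x, F x ∂μ = ∑ i, ∫ x in τ ⁻¹' {i}, F x ∂μ := by
  rw [← integral_iUnion_fintype (fun i => hτ (measurableSet_singleton i))
    (fun i j hij => Disjoint.preimage τ (Set.disjoint_singleton.mpr hij))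
    (fun i => hF.integrableOn), ← Set.preimage_iUnion, Set.iUnion_of_singleton, Set.preimage_univ,
    Measure.restrict_univ]

theorem integral_comp_of_finite [CompleteSpace E] [IsFiniteMeasure μ] (hτ : Measurable τ)
    (h : ι → E) : ∫ x, h (τ x) ∂μ = ∑ i, μ.real (τ ⁻¹' {i}) • h i := by
  rw [integral_eq_sum_setIntegral_fiber hτ (integrable_comp_of_finite hτ h)]
  refine Finset.sum_congr rfl fun i _ => ?_
  rw [setIntegral_congr_fun (hτ (measurableSet_singleton i)) (fun x hx => congrArg h hx),
    setIntegral_const]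

end FiniteTypes

theorem measurable_agentType (n : ℕ) (hn : 0 < n) : Measurable (agentType n hn) :=
  (measurable_from_top (f := fun k : ℕ => (⟨min k (n - 1), by omega⟩ : Fin n))).comp
    (Nat.measurable_floor.comp (measurable_id.mul_const _))

section TypeSlices

variable {n : ℕ} {hn : 0 < n}

def typeSlice (n : ℕ) (hn : 0 < n) (A : Set ℝ) (i : Fin n) : Set ℝ :=
  agentType n hn ⁻¹' {i} ∩ A

def essentialCoalition (n : ℕ) (hn : 0 < n) (A : Set ℝ) : Set ℝ :=
  A \ ⋃ i, ⋃ (_ : volume (typeSlice n hn A i) = 0), typeSlice n hn A i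

theorem measurableSet_typeSlice {A : Set ℝ} (hA : MeasurableSet A) (i : Fin n) :
    MeasurableSet (typeSlice n hn A i) :=
  (measurable_agentType n hn (measurableSet_singleton i)).inter hA

theorem exists_measure_typeSlice_ne_zero {A : Set ℝ} (hA : volume A ≠ 0) :
    ∃ i, volume (typeSlice n hn A i) ≠ 0 := by
  by_contra! h
  refine hA (measure_mono_null (fun t ht => Set.mem_iUnion.mpr ⟨agentType n hn t, ?_⟩)
    (measure_iUnion_null h))
  exact ⟨rfl, ht⟩

theorem essentialCoalition_ae_eq (A : Set ℝ) : essentialCoalition n hn A =ᵐ[volume] A :=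
  sdiff_null_ae_eq_self (measure_iUnion_null fun _ => measure_iUnion_null fun h => h)

theorem measurableSet_essentialCoalition {A : Set ℝ} (hA : MeasurableSet A) :
    MeasurableSet (essentialCoalition n hn A) :=
  hA.diff (.iUnion fun i => .iUnion fun _ => measurableSet_typeSlice hA i)

theorem measure_typeSlice_ne_zero {A : Set ℝ} {t : ℝ} (ht : t ∈ essentialCoalition n hn A) :
    volume (typeSlice n hn A (agentType n hn t)) ≠ 0 := fun h =>
  ht.2 (Set.mem_iUnion₂.mpr ⟨agentType n hn t, h, rfl, ht.1⟩)

variable {E : Type*} [NormedAddCommGroup E] [NormedSpace ℝ E] {A : Set ℝ}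

theorem setIntegral_comp_agentType [CompleteSpace E] (hA : volume A ≠ ⊤) (h : Fin n → E) :
    ∫ t in A, h (agentType n hn t) = ∑ i, volume.real (typeSlice n hn A i) • h i := by
  have : IsFiniteMeasure (volume.restrict A) := isFiniteMeasure_restrict.mpr hA
  rw [integral_comp_of_finite (measurable_agentType n hn)]
  simp_rw [measureReal_restrict_apply (measurable_agentType n hn (measurableSet_singleton _))]
  rfl

theorem setIntegral_eq_sum_typeSlice_smul_setAverage (hA : volume A ≠ ⊤) {g : ℝ → E}
    (hg : IntegrableOn g A) :
    ∫ t in A, g t = ∑ i, volume.real (typeSlice n hn A i) • ⨍ t in typeSlice n hn A i, g t := by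
  rw [integral_eq_sum_setIntegral_fiber (measurable_agentType n hn) hg]
  refine Finset.sum_congr rfl fun i _ => ?_
  rw [Measure.restrict_restrict (measurable_agentType n hn (measurableSet_singleton i))]
  exact (measure_smul_setAverage _ (measure_ne_top_of_subset Set.inter_subset_right hA)).symm

theorem setIntegral_essentialCoalition_comp_agentType [CompleteSpace E] (hA : volume A ≠ ⊤)
    (h : Fin n → E) :
    ∫ t in essentialCoalition n hn A, h (agentType n hn t) =
      ∑ i, volume.real (typeSlice n hn A i) • h i :=
  (setIntegral_congr_set (essentialCoalition_ae_eq A)).trans (setIntegral_comp_agentType hA h)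

end TypeSlices

section Bundles

variable {Y Ω S' : Type*} [NormedAddCommGroup Y] [Lattice Y] {c : Ω → S'}

theorem zero_mem_measBundles : (0 : Ω → Y) ∈ measBundles c :=
  ⟨fun _ => le_rfl, fun _ _ _ => rfl⟩

variable [HasSolidNorm Y] [IsOrderedAddMonoid Y]

theorem isClosed_measBundles : IsClosed (measBundles (Y := Y) c) := by
  simp only [measBundles, Set.ofPred_and, Set.ofPred_forall]
  exact (isClosed_iInter fun ω => isClosed_le continuous_const (continuous_apply ω)).inter
    (isClosed_iInter fun ω => isClosed_iInter fun ω' => isClosed_iInter fun _ =>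
      isClosed_eq (continuous_apply ω) (continuous_apply ω'))

variable [NormedSpace ℝ Y]

theorem smul_mem_measBundles {r : ℝ} (hr : 0 ≤ r) {x : Ω → Y} (hx : x ∈ measBundles c) :
    r • x ∈ measBundles c :=
  ⟨fun ω => smul_nonneg hr (hx.1 ω), fun ω ω' h => by simp only [Pi.smul_apply, hx.2 ω ω' h]⟩

theorem convex_measBundles : Convex ℝ (measBundles (Y := Y) c) :=
  fun x hx y hy a b ha hb _ =>
    ⟨fun ω => add_nonneg (smul_nonneg ha (hx.1 ω)) (smul_nonneg hb (hy.1 ω)),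
      fun ω ω' h => by simp only [Pi.add_apply, Pi.smul_apply, hx.2 ω ω' h, hy.2 ω ω' h]⟩

theorem setAverage_mem_measBundles [Fintype Ω] [CompleteSpace Y] {α : Type*}
    [MeasurableSpace α] {μ : Measure α} {T : Set α} (hT : MeasurableSet T) (hTfin : μ T ≠ ⊤)
    {g : α → Ω → Y} (hg : ∀ t ∈ T, g t ∈ measBundles c) (hgi : IntegrableOn g T μ) :
    ⨍ t in T, g t ∂μ ∈ measBundles c := by
  by_cases h0 : μ T = 0
  · rw [Measure.restrict_eq_zero.mpr h0, average_zero_measure]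
    exact zero_mem_measBundles
  · exact convex_measBundles.set_average_mem isClosed_measBundles h0 hTfin
      ((ae_restrict_mem hT).mono hg) hgi

end Bundles

section ExpUtility

variable {Y Ω : Type*} [NormedAddCommGroup Y] [Lattice Y] [Fintype Ω] {U : Ω → Y → ℝ}
  {q : Ω → ℝ}

theorem continuousOn_expUtility (hcont : ∀ ω, ContinuousOn (U ω) {y : Y | 0 ≤ y}) :
    ContinuousOn (expUtility U q) {x : Ω → Y | ∀ ω, 0 ≤ x ω} :=
  continuousOn_finsetSum _ fun ω _ => continuousOn_const.mul <|
    (hcont ω).comp (continuous_apply ω).continuousOn fun _ hx => hx ω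

variable [HasSolidNorm Y] [IsOrderedAddMonoid Y] [NormedSpace ℝ Y]

theorem concaveOn_expUtility (hq : ∀ ω, 0 ≤ q ω)
    (hconc : ∀ ω, ConcaveOn ℝ {y : Y | 0 ≤ y} (U ω)) :
    ConcaveOn ℝ {x : Ω → Y | ∀ ω, 0 ≤ x ω} (expUtility U q) := by
  refine ⟨fun x hx y hy a b ha hb _ ω => add_nonneg (smul_nonneg ha (hx ω))
    (smul_nonneg hb (hy ω)), fun x hx y hy a b ha hb hab => ?_⟩
  simp only [expUtility, smul_eq_mul, Finset.mul_sum, ← Finset.sum_add_distrib]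
  gcongr with ω
  calc a * (q ω * U ω (x ω)) + b * (q ω * U ω (y ω))
      = q ω * (a • U ω (x ω) + b • U ω (y ω)) := by simp only [smul_eq_mul]; ring
    _ ≤ q ω * U ω (a • x ω + b • y ω) :=
      mul_le_mul_of_nonneg_left ((hconc ω).2 (hx ω) (hy ω) ha hb hab) (hq ω)

theorem eventually_lt_expUtility_smul (hcont : ∀ ω, ContinuousOn (U ω) {y : Y | 0 ≤ y})
    {x : Ω → Y} (hx : ∀ ω, 0 ≤ x ω) {r : ℝ} (hr : r < expUtility U q x) :
    ∀ᶠ l in 𝓝[<] (1 : ℝ), r < expUtility U q (l • x) := by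
  have hsmul : ContinuousOn (fun l : ℝ => expUtility U q (l • x)) (Set.Ici 0) :=
    (continuousOn_expUtility hcont).comp (continuous_id.smul continuous_const).continuousOn
      fun l hl ω => smul_nonneg hl (hx ω)
  have hlim := (hsmul 1 (Set.mem_Ici.mpr zero_le_one)).eventually
    (eventually_gt_nhds (show r < expUtility U q ((1 : ℝ) • x) by rwa [one_smul]))
  exact nhdsWithin_le_of_mem (Filter.mem_of_superset (Ioo_mem_nhdsLT one_pos)
    fun _ hl => Set.mem_Ici.mpr hl.1.le) hlim

end ExpUtility

theorem lt_expUtility_setAverage {Y Ω S' : Type*} [NormedAddCommGroup Y] [Lattice Y]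
    [HasSolidNorm Y] [IsOrderedAddMonoid Y] [NormedSpace ℝ Y] [CompleteSpace Y] [Fintype Ω]
    {U : Ω → Y → ℝ} {q : Ω → ℝ} {c : Ω → S'} (hq : ∀ ω, 0 ≤ q ω)
    (hcont : ∀ ω, ContinuousOn (U ω) {y : Y | 0 ≤ y})
    (hconc : ∀ ω, ConcaveOn ℝ {y : Y | 0 ≤ y} (U ω)) {α : Type*} [MeasurableSpace α]
    {μ : Measure α} {T : Set α} (hT : MeasurableSet T) (hT0 : μ T ≠ 0) (hTfin : μ T ≠ ⊤)
    {g : α → Ω → Y} (hg : ∀ t ∈ T, g t ∈ measBundles c) (hgi : IntegrableOn g T μ) {r : ℝ}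
    (hr : ∀ t ∈ T, r < expUtility U q (g t)) : r < expUtility U q (⨍ t in T, g t ∂μ) := by
  have : IsFiniteMeasure (μ.restrict T) := isFiniteMeasure_restrict.mpr hTfin
  have : NeZero (μ.restrict T) := ⟨by simpa [Measure.restrict_eq_zero] using hT0⟩
  have hV : ConcaveOn ℝ (measBundles c) (expUtility U q) :=
    (concaveOn_expUtility hq hconc).subset (fun x hx => hx.1) convex_measBundles
  exact hV.lt_map_average_of_ae_lt ((continuousOn_expUtility hcont).mono fun x hx => hx.1)
    isClosed_measBundles ((ae_restrict_mem hT).mono hg) hgi ((ae_restrict_mem hT).mono hr)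

theorem exists_mem_Ioo_forall_lt_expUtility_smul {Y Ω ι : Type*} [NormedAddCommGroup Y]
    [Lattice Y] [HasSolidNorm Y] [IsOrderedAddMonoid Y] [NormedSpace ℝ Y] [Fintype Ω] [Finite ι]
    {U : ι → Ω → Y → ℝ} {q : ι → Ω → ℝ}
    (hcont : ∀ i ω, ContinuousOn (U i ω) {y : Y | 0 ≤ y})
    {x : ι → Ω → Y} (hx : ∀ i ω, 0 ≤ x i ω) {r : ι → ℝ} {P : ι → Prop}
    (hr : ∀ i, P i → r i < expUtility (U i) (q i) (x i)) :
    ∃ l ∈ Set.Ioo (0 : ℝ) 1, ∀ i, P i → r i < expUtility (U i) (q i) (l • x i) := by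
  have hev : ∀ i, ∀ᶠ l in 𝓝[<] (1 : ℝ), P i → r i < expUtility (U i) (q i) (l • x i) :=
    fun i => by
      by_cases hi : P i
      · exact (eventually_lt_expUtility_smul (hcont i) (hx i) (hr i hi)).mono fun _ h _ => h
      · exact Filter.Eventually.of_forall fun _ h => absurd h hi
  exact (Filter.Eventually.and (Ioo_mem_nhdsLT one_pos) (Filter.eventually_all.mpr hev)).exists

theorem smul_sum_smul_le_sum_smul_sub {Y ι : Type*} [NormedAddCommGroup Y] [Lattice Y]
    [HasSolidNorm Y] [IsOrderedAddMonoid Y] [NormedSpace ℝ Y] [Fintype ι] {w : ι → ℝ}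
    (hw : ∀ i, 0 ≤ w i) {l : ℝ} (hl0 : 0 ≤ l) (hl1 : l ≤ 1) {a x z : ι → Y}
    (hz : ∀ i, z i ≤ a i) (hx : ∑ i, w i • x i ≤ ∑ i, w i • a i) :
    (1 - l) • ∑ i, w i • z i ≤ ∑ i, w i • (a i - l • x i) :=
  calc (1 - l) • ∑ i, w i • z i
      ≤ (1 - l) • ∑ i, w i • a i := smul_le_smul_of_nonneg_left
        (Finset.sum_le_sum fun i _ => smul_le_smul_of_nonneg_left (hz i) (hw i))
        (sub_nonneg.mpr hl1)
    _ ≤ ∑ i, w i • a i - l • ∑ i, w i • x i := by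
      rw [sub_smul, one_smul]
      exact sub_le_sub_left (smul_le_smul_of_nonneg_left hx hl0) _
    _ = ∑ i, w i • (a i - l • x i) := by
      simp only [smul_sub, Finset.sum_sub_distrib, Finset.smul_sum, smul_comm l]

section Blocking

variable {Y : Type*} [NormedAddCommGroup Y] [Lattice Y] [NormedSpace ℝ Y] [CompleteSpace Y]
  {Ω S' : Type*} [Fintype Ω] {n : ℕ} {hn : 0 < n}
  {c : Fin n → Ω → S'} {U : Fin n → Ω → Y → ℝ} {q : Fin n → Ω → ℝ} {a f0 g0 : Fin n → Ω → Y}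

theorem privatelyBlocks_essentialCoalition {A : Set ℝ} (hAm : MeasurableSet A)
    (hAsub : A ⊆ Set.Icc 0 1) (hA0 : 0 < volume A) (hg0 : ∀ i, g0 i ∈ measBundles (c i))
    (hpref : ∀ i, volume (typeSlice n hn A i) ≠ 0 →
      expUtility (U i) (q i) (f0 i) < expUtility (U i) (q i) (g0 i))
    (hfeas : ∀ ω, ∑ i, volume.real (typeSlice n hn A i) • g0 i ω ≤
      ∑ i, volume.real (typeSlice n hn A i) • a i ω) :
    PrivatelyBlocks hn c U q a (fun t => f0 (agentType n hn t)) (essentialCoalition n hn A)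
      (fun t => g0 (agentType n hn t)) := by
  have hAfin : volume A ≠ ⊤ := measure_ne_top_of_subset hAsub (by simp)
  have : IsFiniteMeasure (volume.restrict (essentialCoalition n hn A)) :=
    isFiniteMeasure_restrict.mpr (measure_ne_top_of_subset Set.sdiff_subset hAfin)
  refine ⟨measurableSet_essentialCoalition hAm, Set.sdiff_subset.trans hAsub,
    measure_congr (essentialCoalition_ae_eq A) ▸ hA0, fun t _ => hg0 _,
    fun t ht => hpref _ (measure_typeSlice_ne_zero ht),
    fun ω => integrable_comp_of_finite (measurable_agentType n hn) fun i => g0 i ω, fun ω => ?_⟩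
  rw [setIntegral_essentialCoalition_comp_agentType hAfin fun i => g0 i ω,
    setIntegral_essentialCoalition_comp_agentType hAfin fun i => a i ω]
  exact hfeas ω

variable [HasSolidNorm Y] [IsOrderedAddMonoid Y]

theorem PrivatelyBlocks.exists_stepAverage {A : Set ℝ} {g : ℝ → Ω → Y}
    (hblock : PrivatelyBlocks hn c U q a (fun t => f0 (agentType n hn t)) A g)
    (hq : ∀ i ω, 0 ≤ q i ω) (hcont : ∀ i ω, ContinuousOn (U i ω) {y : Y | 0 ≤ y})
    (hconc : ∀ i ω, ConcaveOn ℝ {y : Y | 0 ≤ y} (U i ω)) :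
    ∃ x : Fin n → Ω → Y, (∀ i, x i ∈ measBundles (c i)) ∧
      (∀ i, volume (typeSlice n hn A i) ≠ 0 →
        expUtility (U i) (q i) (f0 i) < expUtility (U i) (q i) (x i)) ∧
      ∀ ω, ∑ i, volume.real (typeSlice n hn A i) • x i ω ≤
        ∑ i, volume.real (typeSlice n hn A i) • a i ω := by
  obtain ⟨hAm, hAsub, -, hgmem, hgpref, hgint, hgfeas⟩ := hblock
  have hAfin : volume A ≠ ⊤ := measure_ne_top_of_subset hAsub (by simp)
  have hgi : IntegrableOn g A := Integrable.of_eval hgint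
  have hTfin : ∀ i, volume (typeSlice n hn A i) ≠ ⊤ := fun i =>
    measure_ne_top_of_subset Set.inter_subset_right hAfin
  have hgT : ∀ i, IntegrableOn g (typeSlice n hn A i) := fun i =>
    hgi.mono_set Set.inter_subset_right
  refine ⟨fun i => ⨍ t in typeSlice n hn A i, g t, fun i => setAverage_mem_measBundles
    (measurableSet_typeSlice hAm i) (hTfin i) (fun t ht => ht.1 ▸ hgmem t ht.2) (hgT i),
    fun i hi => lt_expUtility_setAverage (hq i) (hcont i) (hconc i)
      (measurableSet_typeSlice hAm i) hi (hTfin i) (fun t ht => ht.1 ▸ hgmem t ht.2) (hgT i)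
      (fun t ht => ht.1 ▸ hgpref t ht.2),
    fun ω => ?_⟩
  have h := hgfeas ω
  rw [← eval_integral hgint, setIntegral_eq_sum_typeSlice_smul_setAverage hAfin hgi,
    setIntegral_comp_agentType hAfin fun i => a i ω] at h
  simpa using h

theorem exists_privatelyBlocks_slack_of_stepAverage {A : Set ℝ} (hAm : MeasurableSet A)
    (hAsub : A ⊆ Set.Icc 0 1) (hA0 : 0 < volume A)
    (hcont : ∀ i ω, ContinuousOn (U i ω) {y : Y | 0 ≤ y})
    (hpos : ∀ i, ∃ z : Y, 0 < z ∧ ∀ ω, z ≤ a i ω) {x : Fin n → Ω → Y}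
    (hx : ∀ i, x i ∈ measBundles (c i))
    (hx_pref : ∀ i, volume (typeSlice n hn A i) ≠ 0 →
      expUtility (U i) (q i) (f0 i) < expUtility (U i) (q i) (x i))
    (hx_feas : ∀ ω, ∑ i, volume.real (typeSlice n hn A i) • x i ω ≤
      ∑ i, volume.real (typeSlice n hn A i) • a i ω) :
    ∃ (A' : Set ℝ) (g0 : Fin n → Ω → Y) (z : Y),
      PrivatelyBlocks hn c U q a (fun t => f0 (agentType n hn t)) A'
        (fun t => g0 (agentType n hn t)) ∧
      (∀ i, g0 i ∈ measBundles (c i)) ∧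
      0 < z ∧
      ∀ ω, z ≤ ∫ t in A', (a (agentType n hn t) ω - g0 (agentType n hn t) ω) := by
  set w : Fin n → ℝ := fun i => volume.real (typeSlice n hn A i)
  have hAfin : volume A ≠ ⊤ := measure_ne_top_of_subset hAsub (by simp)
  obtain ⟨l, ⟨hl0, hl1⟩, hl⟩ := exists_mem_Ioo_forall_lt_expUtility_smul hcont
    (fun i => (hx i).1) hx_pref
  choose z hz using hpos
  have hslack : ∀ ω, (1 - l) • ∑ i, w i • z i ≤ ∑ i, w i • (a i ω - l • x i ω) := fun ω =>
    smul_sum_smul_le_sum_smul_sub (fun _ => measureReal_nonneg) hl0.le hl1.le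
      (fun i => (hz i).2 ω) (hx_feas ω)
  have hz_pos : 0 < (1 - l) • ∑ i, w i • z i := by
    obtain ⟨i₀, hi₀⟩ := exists_measure_typeSlice_ne_zero (hn := hn) hA0.ne'
    refine smul_pos (sub_pos.mpr hl1) (Finset.sum_pos' (fun i _ =>
      smul_nonneg measureReal_nonneg (hz i).1.le) ⟨i₀, Finset.mem_univ _, smul_pos ?_ (hz i₀).1⟩)
    exact ENNReal.toReal_pos hi₀ (measure_ne_top_of_subset Set.inter_subset_right hAfin)
  refine ⟨essentialCoalition n hn A, fun i => l • x i, _, privatelyBlocks_essentialCoalition hAm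
    hAsub hA0 (fun i => smul_mem_measBundles hl0.le (hx i)) hl fun ω => ?_,
    fun i => smul_mem_measBundles hl0.le (hx i), hz_pos, fun ω => ?_⟩
  · simpa [smul_sub, Finset.sum_sub_distrib] using hz_pos.le.trans (hslack ω)
  · exact (hslack ω).trans_eq
      (setIntegral_essentialCoalition_comp_agentType hAfin fun i => a i ω - l • x i ω).symm

end Blocking

theorem blocking_scaling_lemma_general {Y : Type*} [NormedAddCommGroup Y] [Lattice Y]
    [HasSolidNorm Y] [IsOrderedAddMonoid Y]
    [NormedSpace ℝ Y] [CompleteSpace Y] {Ω S' : Type*} [Fintype Ω] {n : ℕ} (hn : 0 < n)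
    (c : Fin n → Ω → S') (U : Fin n → Ω → Y → ℝ) (q : Fin n → Ω → ℝ)
    (a : Fin n → Ω → Y)
    -- priors are strictly positive
    (hq : ∀ i ω, 0 < q i ω)
    -- (A₁) continuity
    (hcont : ∀ i ω, ContinuousOn (U i ω) {y : Y | 0 ≤ y})
    -- (A₃) concavity
    (hconc : ∀ i ω, ConcaveOn ℝ {y : Y | 0 ≤ y} (U i ω))
    -- (A₅) strong positivity
    (hpos : ∀ i, ∃ z : Y, 0 < z ∧ ∀ ω, z ≤ a i ω)
    -- `f` is a step allocation
    (f0 : Fin n → Ω → Y)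
    -- `f` is privately blocked by some coalition
    (hblocked : ∃ A g, PrivatelyBlocks hn c U q a (fun t => f0 (agentType n hn t)) A g) :
    ∃ (A : Set ℝ) (g0 : Fin n → Ω → Y) (z : Y),
      PrivatelyBlocks hn c U q a (fun t => f0 (agentType n hn t)) A
        (fun t => g0 (agentType n hn t)) ∧
      (∀ i, g0 i ∈ measBundles (c i)) ∧
      0 < z ∧
      ∀ ω, z ≤ ∫ t in A, (a (agentType n hn t) ω - g0 (agentType n hn t) ω) := by
  obtain ⟨A, g, hblock⟩ := hblocked
  obtain ⟨x, hx, hx_pref, hx_feas⟩ :=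
    hblock.exists_stepAverage (fun i ω => (hq i ω).le) hcont hconc
  exact exists_privatelyBlocks_slack_of_stepAverage hblock.1 hblock.2.1 hblock.2.2.1 hcont hpos
    hx hx_pref hx_feas

/-- blocking scaling lemma: under continuity (A₁), concavity (A₃) and
strong positivity (A₅), if a step allocation `f` is privately blocked by some coalition in
`𝓔_c`, then it is privately blocked by a coalition `A` via a *step* function `g`, with a
uniform positive slack `z > 0` : `∫_A (a(t,ω) − g(t,ω)) dμ(t) ≥ z` for every `ω`. -/
theorem blocking_scaling_lemma {Y : Type*} [NormedAddCommGroup Y] [Lattice Y]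
    [HasSolidNorm Y] [IsOrderedAddMonoid Y]
    [NormedSpace ℝ Y] [CompleteSpace Y] {Ω S' : Type*} [Fintype Ω] {n : ℕ} (hn : 0 < n)
    (c : Fin n → Ω → S') (U : Fin n → Ω → Y → ℝ) (q : Fin n → Ω → ℝ)
    (a : Fin n → Ω → Y) (ha : ∀ i, a i ∈ measBundles (c i))
    -- priors are strictly positive
    (hq : ∀ i ω, 0 < q i ω)
    -- (A₁) continuity
    (hcont : ∀ i ω, ContinuousOn (U i ω) {y : Y | 0 ≤ y})
    -- (A₃) concavity
    (hconc : ∀ i ω, ConcaveOn ℝ {y : Y | 0 ≤ y} (U i ω))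
    -- (A₅) strong positivity
    (hpos : ∀ i, ∃ z : Y, 0 < z ∧ ∀ ω, z ≤ a i ω)
    -- `f` is a step allocation
    (f0 : Fin n → Ω → Y) (hf0 : ∀ i, f0 i ∈ measBundles (c i))
    -- `f` is privately blocked by some coalition
    (hblocked : ∃ A g, PrivatelyBlocks hn c U q a (fun t => f0 (agentType n hn t)) A g) :
    ∃ (A : Set ℝ) (g0 : Fin n → Ω → Y) (z : Y),
      PrivatelyBlocks hn c U q a (fun t => f0 (agentType n hn t)) A
        (fun t => g0 (agentType n hn t)) ∧
      (∀ i, g0 i ∈ measBundles (c i)) ∧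
      0 < z ∧
      ∀ ω, z ≤ ∫ t in A, (a (agentType n hn t) ω - g0 (agentType n hn t) ω) :=
  blocking_scaling_lemma_general hn c U q a hq hcont hconc hpos f0 hblocked
end
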